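/- arXiv:2008.04518 — 12 statements merged into one kernel-verified Lean document; each statement's English description precedes it below -/
import Mathlib

section
/- Over a field k, let F_n(X) be the Fibonacci polynomials with F_{-1}=0, F_0=1, F_n = X F_{n-1} + F_{n-2}. For every m ≥ 0, X^m = Σ_{k=0}^{⌊m/2⌋} z_{m−2k} F_{m−2k}(X), where z_m = 1 and z_{m−2k} = (−1)^k (C(m,k) − C(m,k−1))·1 for k = 1,…,⌊m/2⌋ (with C(m,−1):=0). -/
open Polynomial Finset

/-!
Shift the sequence by one, `G (n + 1) = F n` with `G 0 = 0` (the paper's `F_{-1}`; this is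
`shiftFib F`), so that `x * G (n + 1) = G (n + 2) - G n` holds for every `n`. Multiplying the expansion of `x ^ m` by `x`
then turns the coefficients of `x ^ m` into those of `x ^ (m + 1)` by the Pascal-type rule
`z (m + 1) (j + 1) = z m (j + 1) - z m j`. Truncated subtraction makes every term with `2 * j > m`
vanish, except for `2 * j = m + 1`, where the coefficient `z (2 * t + 1) (t + 1)` is zero by the
symmetry of binomial coefficients.
-/

def zeckendorfCoeff (m j : ℕ) : ℤ :=
  if j = 0 then (1 : ℤ) else (-1 : ℤ) ^ j * ((m.choose j : ℤ) - (m.choose (j - 1) : ℤ))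

@[simp]
lemma zeckendorfCoeff_zero_right (m : ℕ) : zeckendorfCoeff m 0 = 1 := rfl

lemma zeckendorfCoeff_succ_succ (m j : ℕ) :
    zeckendorfCoeff (m + 1) (j + 1) = zeckendorfCoeff m (j + 1) - zeckendorfCoeff m j := by
  cases j with
  | zero => simp [zeckendorfCoeff, Nat.choose_succ_succ]
  | succ i =>
    simp only [zeckendorfCoeff, Nat.succ_ne_zero, if_false, Nat.add_sub_cancel,
      Nat.choose_succ_succ m (i + 1), Nat.choose_succ_succ m i]
    push_cast
    ring

lemma zeckendorfCoeff_two_mul_add_one_succ (t : ℕ) :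
    zeckendorfCoeff (2 * t + 1) (t + 1) = 0 := by
  have h : (2 * t + 1).choose (t + 1) = (2 * t + 1).choose t := by
    rw [Nat.choose_symm_of_eq_add]
    omega
  simp [zeckendorfCoeff, h]

section

variable {R : Type*} [CommRing R] {x : R} {F : ℕ → R}

def shiftFib (F : ℕ → R) : ℕ → R
  | 0 => 0
  | n + 1 => F n

@[simp] lemma shiftFib_zero (F : ℕ → R) : shiftFib F 0 = 0 := rfl

@[simp] lemma shiftFib_succ (F : ℕ → R) (n : ℕ) : shiftFib F (n + 1) = F n := rfl

lemma mul_shiftFib_succ (hF0 : F 0 = 1) (hF1 : F 1 = x)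
    (hFrec : ∀ n, F (n + 2) = x * F (n + 1) + F n) (n : ℕ) :
    x * shiftFib F (n + 1) = shiftFib F (n + 2) - shiftFib F n := by
  cases n with
  | zero => simp [hF0, hF1]
  | succ n => simp [hFrec]

lemma zeckendorfCoeff_mul_mul_shiftFib (hF0 : F 0 = 1) (hF1 : F 1 = x)
    (hFrec : ∀ n, F (n + 2) = x * F (n + 1) + F n) (m j : ℕ) :
    (zeckendorfCoeff m j : R) * (x * shiftFib F (m + 1 - 2 * j)) =
      zeckendorfCoeff m j * (shiftFib F (m + 2 - 2 * j) - shiftFib F (m - 2 * j)) := by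
  rcases lt_trichotomy (2 * j) (m + 1) with hlt | heq | hgt
  · obtain ⟨n, rfl⟩ : ∃ n, m = 2 * j + n := ⟨m - 2 * j, by omega⟩
    rw [show 2 * j + n + 1 - 2 * j = n + 1 by omega, show 2 * j + n + 2 - 2 * j = n + 2 by omega,
      show 2 * j + n - 2 * j = n by omega, mul_shiftFib_succ hF0 hF1 hFrec]
  · obtain ⟨t, rfl, rfl⟩ : ∃ t, m = 2 * t + 1 ∧ j = t + 1 := ⟨j - 1, by omega, by omega⟩
    simp [zeckendorfCoeff_two_mul_add_one_succ]
  · simp [show m + 1 - 2 * j = 0 by omega, show m + 2 - 2 * j = 0 by omega,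
      show m - 2 * j = 0 by omega]

theorem pow_eq_sum_zeckendorfCoeff_mul_shiftFib (hF0 : F 0 = 1) (hF1 : F 1 = x)
    (hFrec : ∀ n, F (n + 2) = x * F (n + 1) + F n) (m : ℕ) :
    x ^ m = ∑ j ∈ range (m + 1), (zeckendorfCoeff m j : R) * shiftFib F (m + 1 - 2 * j) := by
  induction m with
  | zero => simp [hF0]
  | succ m ih =>
    set c := fun j ↦ (zeckendorfCoeff m j : R)
    have hlast : ∑ j ∈ range (m + 1), c j * shiftFib F (m + 2 - 2 * j) =
        ∑ j ∈ range (m + 2), c j * shiftFib F (m + 2 - 2 * j) := by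
      rw [sum_range_succ _ (m + 1), show m + 2 - 2 * (m + 1) = 0 by omega, shiftFib_zero, mul_zero,
        add_zero]
    calc x ^ (m + 1)
        = ∑ j ∈ range (m + 1), c j * (shiftFib F (m + 2 - 2 * j) - shiftFib F (m - 2 * j)) := by
          rw [pow_succ', ih, mul_sum]
          refine sum_congr rfl fun j _ ↦ ?_
          rw [mul_left_comm, zeckendorfCoeff_mul_mul_shiftFib hF0 hF1 hFrec]
      _ = ∑ j ∈ range (m + 2), c j * shiftFib F (m + 2 - 2 * j) -
            ∑ j ∈ range (m + 1), c j * shiftFib F (m - 2 * j) := by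
          simp only [mul_sub, sum_sub_distrib, hlast]
      _ = ∑ j ∈ range (m + 1), (c (j + 1) - c j) * shiftFib F (m - 2 * j) +
            shiftFib F (m + 2) := by
          rw [sum_range_succ' _ (m + 1)]
          simp only [sub_mul, sum_sub_distrib, show ∀ j, m + 2 - 2 * (j + 1) = m - 2 * j by omega, c,
            zeckendorfCoeff_zero_right, Int.cast_one, one_mul, Nat.mul_zero, Nat.sub_zero]
          ring
      _ = ∑ j ∈ range (m + 2), (zeckendorfCoeff (m + 1) j : R) * shiftFib F (m + 2 - 2 * j) := by
          rw [sum_range_succ' _ (m + 1)]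
          simp [c, zeckendorfCoeff_succ_succ, show ∀ j, m + 2 - 2 * (j + 1) = m - 2 * j by omega]

lemma sum_zeckendorfCoeff_mul_shiftFib (F : ℕ → R) (m : ℕ) :
    ∑ j ∈ range (m + 1), (zeckendorfCoeff m j : R) * shiftFib F (m + 1 - 2 * j) =
      ∑ j ∈ range (m / 2 + 1), (zeckendorfCoeff m j : R) * F (m - 2 * j) := by
  rw [← sum_subset (range_subset_range.2 (by omega : m / 2 + 1 ≤ m + 1))]
  · refine sum_congr rfl fun j hj ↦ ?_
    rw [mem_range] at hj
    rw [show m + 1 - 2 * j = m - 2 * j + 1 by omega, shiftFib_succ]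
  · intro j _ hj
    rw [mem_range] at hj
    rw [show m + 1 - 2 * j = 0 by omega, shiftFib_zero, mul_zero]

theorem pow_eq_sum_zeckendorfCoeff_mul (hF0 : F 0 = 1) (hF1 : F 1 = x)
    (hFrec : ∀ n, F (n + 2) = x * F (n + 1) + F n) (m : ℕ) :
    x ^ m = ∑ j ∈ range (m / 2 + 1), (zeckendorfCoeff m j : R) * F (m - 2 * j) := by
  rw [pow_eq_sum_zeckendorfCoeff_mul_shiftFib hF0 hF1 hFrec, sum_zeckendorfCoeff_mul_shiftFib]

end

theorem zeckendorf_of_X_pow (k : Type*) [Field k] (F : ℕ → Polynomial k)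
    (hF0 : F 0 = 1) (hF1 : F 1 = X)
    (hFrec : ∀ n : ℕ, F (n + 2) = X * F (n + 1) + F n) :
    ∀ m : ℕ, (X : Polynomial k) ^ m = ∑ j ∈ Finset.range (m / 2 + 1),
      C (((if j = 0 then (1 : ℤ) else
        (-1 : ℤ) ^ j * ((m.choose j : ℤ) - (m.choose (j - 1) : ℤ))) : ℤ) : k) * F (m - 2 * j) := by
  intro m
  simp only [C_eq_intCast]
  exact pow_eq_sum_zeckendorfCoeff_mul hF0 hF1 hFrec m
end

section
/- For all integers k ≥ 1 and i ≥ 0, Σ_{r=0}^{k} (−1)^{k−r} C(i+r, r) · (C(i+2k, k−r) − C(i+2k, k−r−1)) = 0, where C(n,m) = 0 whenever m < 0 or m > n. -/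
/-!
Since `(-1)^r C(i+r, r) = C(-(i+1), r)`, Chu–Vandermonde collapses
`∑_r (-1)^(m-r) C(i+r, r) C(n, m-r)` to `(-1)^m C(n-i-1, m)`. With `n = i + 2k` the two sums
of the identity become `(-1)^k C(2k-1, k)` and `-(-1)^k C(2k-1, k-1)`, which are equal.
-/

open Finset

/-- Binomial coefficient `C(n,m)` with the convention that it is `0`
whenever `m < 0` or `m > n`. -/
def chooseZ (n : ℕ) (m : ℤ) : ℤ := if 0 ≤ m then (n.choose m.toNat : ℤ) else 0

theorem chooseZ_natCast (n j : ℕ) : chooseZ n j = n.choose j := by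
  simp [chooseZ]

theorem chooseZ_of_neg (n : ℕ) {m : ℤ} (hm : m < 0) : chooseZ n m = 0 :=
  if_neg (not_le.mpr hm)

theorem Ring.choose_neg_natCast_sub_one (i b : ℕ) :
    Ring.choose (-(i : ℤ) - 1) b = (-1) ^ b * ((i + b).choose b : ℤ) := by
  rw [sub_eq_neg_add, ← neg_add, Ring.choose_neg, Units.smul_def, Int.negOnePow_def,
    show (1 + (i : ℤ) + b - 1) = ((i + b : ℕ) : ℤ) by push_cast; ring, Ring.choose_natCast]
  simp

theorem sum_neg_one_pow_mul_choose_mul_choose (i n k : ℕ) :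
    ∑ r ∈ range (k + 1), (-1 : ℤ) ^ (k - r) * ((i + r).choose r : ℤ) * (n.choose (k - r) : ℤ) =
      (-1) ^ k * Ring.choose ((n : ℤ) - i - 1) k := by
  rw [show (n : ℤ) - i - 1 = (-(i : ℤ) - 1) + n by ring,
    Ring.add_choose_eq k (Commute.all _ _), Nat.sum_antidiagonal_eq_sum_range_succ
      (fun a b => Ring.choose (-(i : ℤ) - 1) a * Ring.choose (n : ℤ) b), mul_sum]
  refine sum_congr rfl fun r hr => ?_
  rw [Ring.choose_neg_natCast_sub_one, Ring.choose_natCast]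
  obtain ⟨d, rfl⟩ := Nat.exists_eq_add_of_le (Nat.lt_succ_iff.mp (mem_range.mp hr))
  have hsq : (-1 : ℤ) ^ r * (-1) ^ r = 1 := by rw [← pow_add, Even.neg_one_pow ⟨r, rfl⟩]
  rw [Nat.add_sub_cancel_left, pow_add]
  linear_combination (-(-1 : ℤ) ^ d * ((i + r).choose r : ℤ) * (n.choose d : ℤ)) * hsq

theorem sum_neg_one_pow_mul_choose_mul_chooseZ (i n k : ℕ) :
    ∑ r ∈ range (k + 1), (-1 : ℤ) ^ (k - r) * ((i + r).choose r : ℤ) * chooseZ n ((k : ℤ) - r) =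
      (-1) ^ k * Ring.choose ((n : ℤ) - i - 1) k := by
  rw [← sum_neg_one_pow_mul_choose_mul_choose]
  refine sum_congr rfl fun r hr => ?_
  rw [← Nat.cast_sub (Nat.lt_succ_iff.mp (mem_range.mp hr)), chooseZ_natCast]

theorem sum_neg_one_pow_mul_choose_mul_chooseZ_sub_one (i n k : ℕ) :
    ∑ r ∈ range (k + 1 + 1), (-1 : ℤ) ^ (k + 1 - r) * ((i + r).choose r : ℤ) *
        chooseZ n ((k + 1 : ℕ) - r - 1) =
      -((-1) ^ k * Ring.choose ((n : ℤ) - i - 1) k) := by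
  rw [← sum_neg_one_pow_mul_choose_mul_chooseZ, sum_range_succ, chooseZ_of_neg _ (by omega),
    mul_zero, add_zero, ← sum_neg_distrib]
  refine sum_congr rfl fun r hr => ?_
  rw [Nat.sub_add_comm (Nat.lt_succ_iff.mp (mem_range.mp hr)), pow_succ,
    show ((k + 1 : ℕ) : ℤ) - r - 1 = (k : ℤ) - r by push_cast; ring]
  ring

theorem catalan_triangle_identity_one :
    ∀ k i : ℕ, 1 ≤ k →
      ∑ r ∈ Finset.range (k + 1), (-1 : ℤ) ^ (k - r) * ((i + r).choose r : ℤ) *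
        (chooseZ (i + 2 * k) ((k : ℤ) - r) - chooseZ (i + 2 * k) ((k : ℤ) - r - 1)) = 0 := by
  intro k i hk
  obtain ⟨j, rfl⟩ := Nat.exists_eq_add_of_le' hk
  have hN : ((i + 2 * (j + 1) : ℕ) : ℤ) - i - 1 = ((2 * j + 1 : ℕ) : ℤ) := by push_cast; ring
  simp only [mul_sub, sum_sub_distrib]
  rw [sum_neg_one_pow_mul_choose_mul_chooseZ, sum_neg_one_pow_mul_choose_mul_chooseZ_sub_one, hN,
    Ring.choose_natCast, Ring.choose_natCast, Nat.choose_symm_half]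
  ring
end

section
/- In the field F_2((X^{-1})), the Laurent series L = Σ_{n=1}^∞ X^{-(2^n - 1)} satisfies L² + X·L + 1 = 0. -/
open scoped Classical

/-!
Write `T = single 1 1`, so that `X = T⁻¹` and `L = ∑ T ^ (2 ^ n - 1)`. In characteristic two the
cross terms of `L * L` cancel in pairs, so `L ^ 2` carries the coefficient of `T ^ a` at `T ^ (a + a)`
and vanishes at odd exponents: `L ^ 2 = ∑ T ^ (2 ^ (n + 1) - 2)`. On the other hand
`X * L = ∑ T ^ (2 ^ n - 2)` consists of the same terms together with `T ^ 0`, which cancels `1`.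
-/

theorem add_self_injective {M : Type*} [AddMonoid M] [IsAddTorsionFree M] :
    Function.Injective (fun a : M => a + a) := fun a b h =>
  nsmul_right_injective two_ne_zero (by simpa only [two_nsmul] using h)

namespace HahnSeries

variable {Γ R : Type*} [AddCommMonoid Γ] [PartialOrder Γ] [IsOrderedCancelAddMonoid Γ]
  [CommSemiring R] [CharP R 2]

theorem coeff_sq_eq_sum_diag (x : R⟦Γ⟧) (b : Γ) :
    (x ^ 2).coeff b = ∑ ij ∈ (Finset.antidiagonal x.isPWO_support x.isPWO_support b).filter
      (fun ij => ij.1 = ij.2), x.coeff ij.1 * x.coeff ij.2 := by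
  rw [sq, coeff_mul, ← Finset.sum_filter_add_sum_filter_not _ (fun ij => ij.1 = ij.2)]
  convert add_zero _
  -- the swap `(i, j) ↦ (j, i)` pairs off the terms with `i ≠ j`, and `r + r = 0`
  refine Finset.sum_involution (fun ij _ => ij.swap) (fun ij _ => ?_) (fun ij hij _ h => ?_)
    (fun ij hij => ?_) (fun ij _ => ij.swap_swap)
  · rw [Prod.fst_swap, Prod.snd_swap, mul_comm (x.coeff ij.2), CharTwo.add_self_eq_zero]
  · exact (Finset.mem_filter.mp hij).2 (congrArg Prod.fst h).symm
  · simp only [Finset.mem_filter, Finset.mem_antidiagonal] at hij ⊢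
    exact ⟨⟨hij.1.2.1, hij.1.1, by rw [add_comm]; exact hij.1.2.2⟩, fun h => hij.2 h.symm⟩

theorem coeff_sq_eq_zero (x : R⟦Γ⟧) {b : Γ} (hb : ∀ a, a + a ≠ b) : (x ^ 2).coeff b = 0 := by
  rw [coeff_sq_eq_sum_diag, Finset.sum_eq_zero]
  rintro ⟨i, j⟩ hij
  simp only [Finset.mem_filter, Finset.mem_antidiagonal] at hij
  exact absurd (hij.2 ▸ hij.1.2.2) (hb j)

variable [IsAddTorsionFree Γ]

theorem coeff_sq_add_self (x : R⟦Γ⟧) (a : Γ) : (x ^ 2).coeff (a + a) = x.coeff a ^ 2 := by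
  rw [coeff_sq_eq_sum_diag, sq, Finset.sum_eq_single (a, a)]
  · rintro ⟨i, j⟩ hij hne
    simp only [Finset.mem_filter, Finset.mem_antidiagonal] at hij
    obtain ⟨⟨-, -, hsum⟩, rfl⟩ := hij
    exact absurd (by rw [add_self_injective hsum]) hne
  · intro h
    by_contra hne
    exact h (by simp [left_ne_zero_of_mul hne])

theorem coeff_sq_of_coeff_eq_ite {P : Γ → Prop} (x : R⟦Γ⟧)
    (hx : ∀ a, x.coeff a = if P a then 1 else 0) (b : Γ) :
    (x ^ 2).coeff b = if ∃ a, a + a = b ∧ P a then 1 else 0 := by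
  by_cases hb : ∃ a, a + a = b
  · obtain ⟨a, rfl⟩ := hb
    have hunique : (∃ c, c + c = a + a ∧ P c) ↔ P a :=
      ⟨fun ⟨c, hc, hPc⟩ => add_self_injective hc ▸ hPc, fun h => ⟨a, rfl, h⟩⟩
    rw [coeff_sq_add_self, hx, if_congr hunique rfl rfl]
    split_ifs <;> simp
  · rw [not_exists] at hb
    rw [coeff_sq_eq_zero x hb, if_neg fun ⟨a, ha, _⟩ => hb a ha]

end HahnSeries

theorem exists_pow_sub_one_eq_add_one_iff (m : ℤ) :
    (∃ n : ℕ, 1 ≤ n ∧ m + 1 = 2 ^ n - 1) ↔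
      m = 0 ∨ ∃ a, a + a = m ∧ ∃ n : ℕ, 1 ≤ n ∧ a = 2 ^ n - 1 := by
  constructor
  · rintro ⟨_ | _ | n, hn, hm⟩
    · omega
    · left; omega
    · right; exact ⟨2 ^ (n + 1) - 1, by rw [pow_succ] at hm ⊢; omega, n + 1, by omega, rfl⟩
  · rintro (rfl | ⟨a, rfl, n, hn, rfl⟩)
    · exact ⟨1, le_rfl, by norm_num⟩
    · exact ⟨n + 1, by omega, by rw [pow_succ]; ring⟩

theorem goldenRatio_char_two_series (L : LaurentSeries (ZMod 2))
    (hL : ∀ m : ℤ, L.coeff m = if ∃ n : ℕ, 1 ≤ n ∧ m = 2 ^ n - 1 then 1 else 0) :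
    L ^ 2 + (HahnSeries.single (-1 : ℤ) (1 : ZMod 2)) * L + 1 = 0 := by
  ext m
  have hshift : (HahnSeries.single (-1 : ℤ) (1 : ZMod 2) * L).coeff m = L.coeff (m + 1) := by
    simpa using HahnSeries.coeff_single_mul_add (r := (1 : ZMod 2)) (x := L) (a := m + 1) (b := -1)
  have hexcl : ¬ (m = 0 ∧ ∃ a, a + a = m ∧ ∃ n : ℕ, 1 ≤ n ∧ a = 2 ^ n - 1) := by
    rintro ⟨rfl, a, ha, n, hn, rfl⟩
    have := one_lt_pow₀ (one_lt_two : (1 : ℤ) < 2) (by omega : n ≠ 0)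
    omega
  rw [HahnSeries.coeff_add, HahnSeries.coeff_add, hshift, HahnSeries.coeff_one,
    HahnSeries.coeff_sq_of_coeff_eq_ite L hL, hL, exists_pow_sub_one_eq_add_one_iff,
    HahnSeries.coeff_zero]
  generalize (∃ a, a + a = m ∧ ∃ n : ℕ, 1 ≤ n ∧ a = 2 ^ n - 1) = A at hexcl ⊢
  by_cases hA : A <;> by_cases h0 : m = 0 <;> simp_all <;> decide
end

section
/- For every n ≥ 1, the Catalan number C_n is odd if and only if n = 2^r − 1 for some integer r ≥ 1; moreover C_0 = 1 is odd. -/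
/-!
Reduce Segner's recurrence `C (n + 1) = ∑_{i + j = n} C i * C j` modulo 2: the terms `(i, j)`
and `(j, i)` cancel, so only the diagonal term `C m ^ 2 ≡ C m` survives when `n = 2 m`, and
nothing survives when `n` is odd. Hence `C (2 m + 1) ≡ C m` and `C (2 m + 2)` is even, and
induction on `n` shows that `C n` is odd exactly when the binary digits of `n` are all ones.
-/

open Finset

namespace CharTwo

variable {R : Type*} [CommSemiring R] [CharP R 2]

theorem sum_mul_eq_zero_of_swap_mem {α : Type*} (f : α → R) {s : Finset (α × α)}
    (hswap : ∀ p ∈ s, p.swap ∈ s) (hdiag : ∀ p ∈ s, p.1 ≠ p.2) :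
    ∑ p ∈ s, f p.1 * f p.2 = 0 :=
  sum_involution (fun p _ ↦ p.swap)
    (fun p _ ↦ by rw [Prod.fst_swap, Prod.snd_swap, mul_comm, add_self_eq_zero])
    (fun p hp _ h ↦ hdiag p hp (congrArg Prod.snd h)) hswap (fun p _ ↦ p.swap_swap)

theorem sum_antidiagonal_two_mul_add_one_mul (f : ℕ → R) (m : ℕ) :
    ∑ p ∈ antidiagonal (2 * m + 1), f p.1 * f p.2 = 0 :=
  sum_mul_eq_zero_of_swap_mem f (fun p hp ↦ by simpa [add_comm] using hp)
    (fun p hp h ↦ by rw [HasAntidiagonal.mem_antidiagonal] at hp; omega)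

theorem sum_antidiagonal_two_mul_mul (f : ℕ → R) (m : ℕ) :
    ∑ p ∈ antidiagonal (2 * m), f p.1 * f p.2 = f m ^ 2 := by
  have hmm : (m, m) ∈ antidiagonal (2 * m) := by rw [HasAntidiagonal.mem_antidiagonal]; omega
  rw [← add_sum_erase _ _ hmm, sum_mul_eq_zero_of_swap_mem f, add_zero, sq]
  · intro p hp
    rw [mem_erase, HasAntidiagonal.mem_antidiagonal] at hp ⊢
    refine ⟨fun h ↦ hp.1 (by rw [← p.swap_swap, h]; rfl), ?_⟩
    rw [Prod.fst_swap, Prod.snd_swap]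
    omega
  · intro p hp h
    rw [mem_erase, HasAntidiagonal.mem_antidiagonal] at hp
    exact hp.1 (Prod.ext (by omega) (by omega))

end CharTwo

theorem odd_catalan_two_mul_add_one_iff (m : ℕ) :
    Odd (catalan (2 * m + 1)) ↔ Odd (catalan m) := by
  rw [← ZMod.natCast_eq_one_iff_odd, ← ZMod.natCast_eq_one_iff_odd, catalan_succ']
  push_cast
  rw [CharTwo.sum_antidiagonal_two_mul_mul (fun k ↦ (catalan k : ZMod 2)), ZMod.pow_card]

theorem even_catalan_two_mul_add_two (m : ℕ) : Even (catalan (2 * m + 2)) := by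
  rw [← ZMod.natCast_eq_zero_iff_even, catalan_succ']
  push_cast
  exact CharTwo.sum_antidiagonal_two_mul_add_one_mul (fun k ↦ (catalan k : ZMod 2)) m

theorem exists_two_mul_add_one_eq_two_pow_sub_one_iff (m : ℕ) :
    (∃ r, 2 * m + 1 = 2 ^ r - 1) ↔ ∃ r, m = 2 ^ r - 1 := by
  constructor
  · rintro ⟨_ | r, hr⟩
    · simp at hr
    · exact ⟨r, by rw [pow_succ] at hr; omega⟩
  · rintro ⟨r, rfl⟩
    exact ⟨r + 1, by rw [pow_succ]; have := r.one_le_two_pow; omega⟩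

theorem two_mul_add_two_ne_two_pow_sub_one (m r : ℕ) : 2 * m + 2 ≠ 2 ^ r - 1 := by
  rcases r with _ | r
  · simp
  · rw [pow_succ]; omega

theorem odd_catalan_iff (n : ℕ) : Odd (catalan n) ↔ ∃ r, n = 2 ^ r - 1 := by
  induction n using Nat.strong_induction_on with
  | _ n ih =>
    rcases n with _ | k
    · exact iff_of_true (by simp) ⟨0, rfl⟩
    obtain ⟨m, rfl | rfl⟩ := Nat.even_or_odd' k
    · rw [odd_catalan_two_mul_add_one_iff, ih m (by omega),
        exists_two_mul_add_one_eq_two_pow_sub_one_iff]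
    · exact iff_of_false (Nat.not_odd_iff_even.2 (even_catalan_two_mul_add_two m))
        fun ⟨r, hr⟩ ↦ two_mul_add_two_ne_two_pow_sub_one m r hr

theorem catalan_odd_iff :
    (∀ n : ℕ, 1 ≤ n → (Odd (catalan n) ↔ ∃ r : ℕ, 1 ≤ r ∧ n = 2 ^ r - 1)) ∧
      Odd (catalan 0) := by
  refine ⟨fun n hn ↦ (odd_catalan_iff n).trans ⟨?_, fun ⟨r, _, hr⟩ ↦ ⟨r, hr⟩⟩,
    by simp⟩
  rintro ⟨_ | r, hr⟩
  · simp at hr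
    omega
  · exact ⟨r + 1, r.succ_pos, hr⟩
end

section
/- Let p be an odd prime and n ≥ 0 with p-adic digits a_i (so n = Σ a_i p^i). If a_0 ≠ p−1, then C_n ≢ 0 (mod p) if and only if every digit a_i satisfies a_i ≤ (p−1)/2. -/
/-!
Since `n % p ≠ p - 1`, `p` does not divide `n + 1`, so by `(n + 1) * C_n = (2n).choose n` the
prime `p` divides `C_n` exactly when it divides the central binomial coefficient. By Kummer's
theorem that happens iff adding `n` to itself in base `p` produces a carry, and doubling `n`
produces no carry iff every digit `a_i` satisfies `2 * a_i < p`, i.e. `a_i ≤ (p - 1) / 2`.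
-/

open Finset

theorem Nat.not_dvd_succ_of_mod_ne_sub_one {p n : ℕ} (h : n % p ≠ p - 1) : ¬ p ∣ n + 1 := by
  rintro ⟨_ | k, hk⟩
  · omega
  · have hp : 0 < p := Nat.pos_of_ne_zero (by rintro rfl; simp at hk)
    rw [Nat.mul_add_one] at hk
    apply h
    rw [show n = p * k + (p - 1) by omega, Nat.mul_add_mod, Nat.mod_eq_of_lt (by omega)]

theorem Nat.Prime.dvd_catalan_iff {p n : ℕ} (hp : p.Prime) (hn : ¬ p ∣ n + 1) :
    p ∣ catalan n ↔ p ∣ n.centralBinom := by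
  rw [← succ_mul_catalan_eq_centralBinom, hp.dvd_mul, or_iff_right hn]

theorem Nat.Prime.dvd_choose_add_iff {p n k : ℕ} (hp : p.Prime) :
    p ∣ (n + k).choose k ↔ ∃ i, p ^ i ≤ k % p ^ i + n % p ^ i := by
  have := Fact.mk hp
  rw [dvd_iff_padicValNat_ne_zero (Nat.choose_pos (Nat.le_add_left k n)).ne',
    padicValNat_choose' (Nat.lt_succ_self _), Finset.card_ne_zero, filter_nonempty_iff]
  constructor
  · rintro ⟨i, -, hi⟩
    exact ⟨i, hi⟩
  · rintro ⟨i, hi⟩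
    refine ⟨i, mem_Ico.mpr ⟨?_, ?_⟩, hi⟩
    · rcases i with _ | i
      · simp [Nat.mod_one] at hi
      · omega
    · by_contra! hbi
      have hlt : n + k < p ^ i := (Nat.lt_pow_succ_log_self hp.one_lt _).trans_le
        (Nat.pow_le_pow_right hp.pos hbi)
      have := Nat.mod_le k (p ^ i)
      have := Nat.mod_le n (p ^ i)
      omega

theorem Nat.forall_two_mul_mod_pow_lt_iff {p n : ℕ} :
    (∀ i, 2 * (n % p ^ i) < p ^ i) ↔ ∀ i, 2 * (n / p ^ i % p) < p := by
  constructor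
  · intro h i
    refine Nat.lt_of_mul_lt_mul_left (a := p ^ i) ?_
    calc p ^ i * (2 * (n / p ^ i % p)) ≤ 2 * (n % p ^ (i + 1)) := by rw [Nat.mod_pow_succ]; lia
      _ < p ^ (i + 1) := h (i + 1)
      _ = p ^ i * p := pow_succ p i
  · intro h i
    induction i with
    | zero => simp [Nat.mod_one]
    | succ i ih =>
      calc 2 * (n % p ^ (i + 1)) = 2 * (n % p ^ i) + p ^ i * (2 * (n / p ^ i % p)) := by
            rw [Nat.mod_pow_succ]; ring
        _ < p ^ i * (2 * (n / p ^ i % p) + 1) := by lia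
        _ ≤ p ^ i * p := Nat.mul_le_mul_left _ (h i)
        _ = p ^ (i + 1) := (pow_succ p i).symm

theorem Odd.le_sub_one_div_two_iff {p d : ℕ} (hp : Odd p) : d ≤ (p - 1) / 2 ↔ 2 * d < p := by
  obtain ⟨m, rfl⟩ := hp
  omega

theorem catalan_not_dvd_iff_digits (p : ℕ) (hp : p.Prime) (hodd : Odd p) (n : ℕ)
    (h0 : n % p ≠ p - 1) :
    ¬ (p ∣ catalan n) ↔ ∀ i : ℕ, (n / p ^ i) % p ≤ (p - 1) / 2 := by
  rw [hp.dvd_catalan_iff (Nat.not_dvd_succ_of_mod_ne_sub_one h0),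
    Nat.centralBinom_eq_two_mul_choose, two_mul, hp.dvd_choose_add_iff]
  simp only [not_exists, not_le, hodd.le_sub_one_div_two_iff, ← two_mul]
  exact Nat.forall_two_mul_mod_pow_lt_iff
end

section
/- Let p be an odd prime and n ≥ 0 with lowest base-p digit equal to p−1; write n = p·n₁ + (p−1). Then C_n ≡ −(2n₁+1)·C_{n₁} (mod p). -/
theorem choose_two_mul_succ_eq (m : ℕ) :
    Nat.choose (2 * m + 1) (m + 1) = (2 * m + 1) * catalan m := by
  have h := Nat.add_one_mul_choose_eq (2 * m) m
  have h2 : (m + 1) * catalan m = Nat.choose (2 * m) m := by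
    rw [succ_mul_catalan_eq_centralBinom, Nat.centralBinom_eq_two_mul_choose]
  apply Nat.eq_of_mul_eq_mul_right (Nat.succ_pos m)
  calc Nat.choose (2 * m + 1) (m + 1) * (m + 1)
      = (2 * m + 1) * Nat.choose (2 * m) m := by
        rw [← h]
    _ = (2 * m + 1) * ((m + 1) * catalan m) := by rw [h2]
    _ = (2 * m + 1) * catalan m * (m + 1) := by ring

theorem catalan_add_choose (n : ℕ) :
    catalan n + Nat.choose (2 * n) (n + 1) = Nat.choose (2 * n) n := by
  have h2 : (n + 1) * catalan n = Nat.choose (2 * n) n := by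
    rw [succ_mul_catalan_eq_centralBinom, Nat.centralBinom_eq_two_mul_choose]
  apply Nat.eq_of_mul_eq_mul_right (Nat.succ_pos n)
  rw [add_mul, Nat.choose_succ_right_eq]
  have h3 : 2 * n - n = n := by omega
  rw [h3]
  nlinarith [h2]

theorem catalan_lowest_digit_maximal (p : ℕ) (hp : p.Prime) (hodd : Odd p)
    (n n₁ : ℕ) (hn : n = p * n₁ + (p - 1)) :
    (catalan n : ZMod p) = -((2 * n₁ + 1 : ℕ) : ZMod p) * (catalan n₁ : ZMod p) := by
  haveI : Fact p.Prime := ⟨hp⟩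
  have hp3 : 3 ≤ p := by
    rcases hodd with ⟨k, hk⟩
    have := hp.two_le
    omega
  have e1 : p * (2 * n₁ + 1) = 2 * (p * n₁) + p := by ring
  have e2 : p * (n₁ + 1) = p * n₁ + p := by ring
  have h2n : 2 * n = p * (2 * n₁ + 1) + (p - 2) := by omega
  have hn1 : n + 1 = p * (n₁ + 1) := by omega
  have hmodn : n % p = p - 1 := by
    rw [hn, Nat.mul_add_mod, Nat.mod_eq_of_lt (show p - 1 < p by omega)]
  have hdivn : n / p = n₁ := by
    rw [hn, Nat.mul_add_div (show 0 < p by omega), Nat.div_eq_of_lt (show p - 1 < p by omega), Nat.add_zero]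
  have hmod2n : (2 * n) % p = p - 2 := by
    rw [h2n, Nat.mul_add_mod, Nat.mod_eq_of_lt (show p - 2 < p by omega)]
  have hdiv2n : (2 * n) / p = 2 * n₁ + 1 := by
    rw [h2n, Nat.mul_add_div (show 0 < p by omega), Nat.div_eq_of_lt (show p - 2 < p by omega), Nat.add_zero]
  have hmodn1 : (n + 1) % p = 0 := by
    rw [hn1, Nat.mul_mod_right]
  have hdivn1 : (n + 1) / p = n₁ + 1 := by
    rw [hn1, Nat.mul_div_cancel_left _ (by omega)]
  -- Lucas for choose (2n) n
  have hA : ((Nat.choose (2 * n) n : ℕ) : ZMod p) = 0 := by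
    have := (Choose.choose_modEq_choose_mod_mul_choose_div_nat (n := 2 * n) (k := n) (p := p))
    rw [hmod2n, hmodn, hdiv2n, hdivn, Nat.choose_eq_zero_of_lt (show p - 2 < p - 1 by omega), Nat.zero_mul] at this
    have := (ZMod.natCast_eq_natCast_iff _ _ _).mpr this
    simpa using this
  -- Lucas for choose (2n) (n+1)
  have hB : ((Nat.choose (2 * n) (n + 1) : ℕ) : ZMod p)
      = ((2 * n₁ + 1) * catalan n₁ : ℕ) := by
    have := (Choose.choose_modEq_choose_mod_mul_choose_div_nat (n := 2 * n) (k := n + 1) (p := p))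
    rw [hmod2n, hmodn1, hdiv2n, hdivn1, Nat.choose_zero_right, Nat.one_mul,
      choose_two_mul_succ_eq] at this
    exact (ZMod.natCast_eq_natCast_iff _ _ _).mpr this
  have key := catalan_add_choose n
  have : ((catalan n : ℕ) : ZMod p) + ((Nat.choose (2 * n) (n + 1) : ℕ) : ZMod p)
      = ((Nat.choose (2 * n) n : ℕ) : ZMod p) := by
    rw [← Nat.cast_add, key]
  rw [hA, hB] at this
  push_cast at this ⊢
  linear_combination this
end

section
/- For every n ≥ 1, C(2n, n−1) ≡ C(2n₁+1, n₁) (mod p) whenever the lowest base-p digit of n equals p−1 and n = p·n₁ + (p−1), where p is an odd prime. -/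
theorem choose_two_n_pred_mod_p (p : ℕ) (hp : p.Prime) (hodd : Odd p)
    (n n₁ : ℕ) (hn1 : 1 ≤ n) (hn : n = p * n₁ + (p - 1)) :
    (((2 * n).choose (n - 1) : ℕ) : ZMod p) = (((2 * n₁ + 1).choose n₁ : ℕ) : ZMod p) := by
  haveI : Fact p.Prime := ⟨hp⟩
  obtain ⟨k, hk⟩ := hodd
  have hp3 : 3 ≤ p := by have := hp.two_le; omega
  have hmul : p * (2 * n₁ + 1) = 2 * (p * n₁) + p := by ring
  have h2n : 2 * n = p * (2 * n₁ + 1) + (p - 2) := by omega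
  have hn1' : n - 1 = p * n₁ + (p - 2) := by omega
  have hmod : (2 * n).choose (n - 1) ≡
      ((2 * n) % p).choose ((n - 1) % p) * ((2 * n) / p).choose ((n - 1) / p) [MOD p] :=
    Choose.choose_modEq_choose_mod_mul_choose_div_nat
  have e1 : (2 * n) % p = p - 2 := by
    rw [h2n, Nat.mul_add_mod, Nat.mod_eq_of_lt (by omega)]
  have e2 : (2 * n) / p = 2 * n₁ + 1 := by
    rw [h2n, Nat.mul_add_div (by omega), Nat.div_eq_of_lt (by omega), add_zero]
  have e3 : (n - 1) % p = p - 2 := by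
    rw [hn1', Nat.mul_add_mod, Nat.mod_eq_of_lt (by omega)]
  have e4 : (n - 1) / p = n₁ := by
    rw [hn1', Nat.mul_add_div (by omega), Nat.div_eq_of_lt (by omega), add_zero]
  rw [e1, e2, e3, e4, Nat.choose_self, one_mul] at hmod
  exact_mod_cast (ZMod.natCast_eq_natCast_iff _ _ _).mpr hmod
end

section
/- Let k be a field of characteristic 2 and consider the Laurent series φ̄ = Σ_{n=1}^∞ ν₂(2n)·(X^{-(2n−1)} + X^{-2n}) in F_2((X^{-1})), where ν₂(m) is the 2-adic valuation of m reduced mod 2. Then φ̄ satisfies φ̄² + (X+1)·φ̄ + 1 = 0. -/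
/-!
In characteristic two squaring is additive, so the coefficient of `X⁻²ⁿ` in `φ̄²` is `cₙ²` and the
odd coefficients of `φ̄²` vanish. Comparing coefficients, the equation becomes
`c₂ₙ₊₂ = c₂ₙ₊₁` together with `cₙ² + c₂ₙ₊₁ + c₂ₙ = [n = 0]`. Writing `cₙ = ν₂(n) + ν₂(n + 1)`,
the first is immediate and the second follows from `ν₂(2m) = ν₂(m) + 1`.
-/

open Finset

namespace HahnSeries

section CharTwo

variable {Γ R : Type*} [AddCommMonoid Γ] [PartialOrder Γ] [IsOrderedCancelAddMonoid Γ]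
  [CommSemiring R] [CharP R 2]

open Classical in
theorem coeff_mul_self_eq_sum_diagonal (x : R⟦Γ⟧) (g : Γ) :
    (x * x).coeff g = ∑ ij ∈ antidiagonal x.isPWO_support x.isPWO_support g with ij.1 = ij.2,
      x.coeff ij.1 * x.coeff ij.2 := by
  rw [coeff_mul, ← sum_filter_add_sum_filter_not _ (fun ij : Γ × Γ => ij.1 = ij.2)]
  -- off the diagonal the terms `(i, j)` and `(j, i)` cancel in characteristic two
  refine (congrArg (_ + ·) ?_).trans (add_zero _)
  refine sum_involution (fun ij _ => ij.swap) (fun ij _ => ?_) (fun ij hij _ hswap => ?_)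
    (fun ij hij => ?_) (fun ij _ => ij.swap_swap)
  · rw [Prod.fst_swap, Prod.snd_swap, mul_comm, CharTwo.add_self_eq_zero]
  · exact (mem_filter.1 hij).2 (congrArg Prod.fst hswap).symm
  · simp only [mem_filter, Finset.mem_antidiagonal, Prod.fst_swap, Prod.snd_swap] at hij ⊢
    exact ⟨⟨hij.1.2.1, hij.1.1, add_comm ij.2 ij.1 ▸ hij.1.2.2⟩, fun h => hij.2 h.symm⟩

theorem coeff_mul_self_eq_zero_of_forall_add_self_ne (x : R⟦Γ⟧) {g : Γ}
    (hg : ∀ a, a + a ≠ g) : (x * x).coeff g = 0 := by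
  rw [coeff_mul_self_eq_sum_diagonal, sum_eq_zero]
  intro ij hij
  simp only [mem_filter, Finset.mem_antidiagonal] at hij
  exact absurd (hij.2 ▸ hij.1.2.2) (hg ij.2)

end CharTwo

theorem coeff_mul_self_add_self {Γ R : Type*} [AddCommMonoid Γ] [LinearOrder Γ]
    [IsOrderedCancelAddMonoid Γ] [CommSemiring R] [CharP R 2] (x : R⟦Γ⟧) (a : Γ) :
    (x * x).coeff (a + a) = x.coeff a ^ 2 := by
  have hdiag : ∀ b : Γ, b + b = a + a → b = a := fun b =>
    (strictMono_id.add strictMono_id).injective.eq_iff.1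
  rw [coeff_mul_self_eq_sum_diagonal, sq,
    ← sum_singleton (fun ij : Γ × Γ => x.coeff ij.1 * x.coeff ij.2) (a, a)]
  refine sum_subset (fun ij hij => ?_) (fun ij hij hnot => ?_)
  · simp only [mem_filter, Finset.mem_antidiagonal] at hij
    obtain rfl := hdiag ij.2 (hij.2 ▸ hij.1.2.2)
    simp [Prod.ext_iff, hij.2]
  · obtain rfl := mem_singleton.1 hij
    have : x.coeff a = 0 := by simpa using hnot
    simp [this]

end HahnSeries

namespace LaurentSeries

theorem sq_add_mul_add_one_eq_zero_of_coeff {R : Type*} [CommRing R] [CharP R 2]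
    (L : LaurentSeries R) (hnonpos : ∀ m : ℤ, m ≤ 0 → L.coeff m = 0)
    (heven : ∀ n : ℕ,
      L.coeff n ^ 2 + L.coeff (2 * n + 1) + L.coeff (2 * n) + (if n = 0 then 1 else 0) = 0)
    (hodd : ∀ n : ℕ, L.coeff (2 * n + 2) = L.coeff (2 * n + 1)) :
    L ^ 2 + (HahnSeries.single (-1 : ℤ) (1 : R) + 1) * L + 1 = 0 := by
  have hshift (k : ℤ) : (HahnSeries.single (-1 : ℤ) (1 : R) * L).coeff k = L.coeff (k + 1) := by
    simpa using HahnSeries.coeff_single_mul_add (r := (1 : R)) (x := L) (a := k + 1) (b := -1)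
  ext k
  simp only [sq, add_mul, one_mul, HahnSeries.coeff_add, hshift, HahnSeries.coeff_one,
    HahnSeries.coeff_zero]
  obtain ⟨m, rfl | rfl⟩ := Int.even_or_odd' k
  · rw [two_mul, HahnSeries.coeff_mul_self_add_self, ← two_mul]
    rcases lt_or_ge m 0 with hm | hm
    · simp [hnonpos m hm.le, hnonpos (2 * m) (by omega), hnonpos (2 * m + 1) (by omega), hm.ne]
    · lift m to ℕ using hm
      simpa [add_assoc] using heven m
  · rw [HahnSeries.coeff_mul_self_eq_zero_of_forall_add_self_ne _ fun a => by omega,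
      if_neg (by omega), add_zero, zero_add, add_assoc, one_add_one_eq_two]
    rcases lt_or_ge m 0 with hm | hm
    · rw [hnonpos (2 * m + 2) (by omega), hnonpos (2 * m + 1) (by omega), add_zero]
    · lift m to ℕ using hm
      rw [hodd m, CharTwo.add_self_eq_zero]

end LaurentSeries

theorem padicValNat_prime_mul {p n : ℕ} [hp : Fact p.Prime] (hn : n ≠ 0) :
    padicValNat p (p * n) = padicValNat p n + 1 := by
  rw [padicValNat.mul hp.out.ne_zero hn, padicValNat_self, add_comm]

theorem padicValNat_two_mul_add_one (n : ℕ) : padicValNat 2 (2 * n + 1) = 0 :=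
  padicValNat.eq_zero_of_not_dvd (by omega)

/-- The coefficient of `X⁻ⁿ` in `φ̄`: only one of `n`, `n + 1` is even, so this is `ν₂(2n')`
at both `n = 2n' - 1` and `n = 2n'`. -/
def phiBarCoeff (n : ℕ) : ZMod 2 :=
  padicValNat 2 n + padicValNat 2 (n + 1)

theorem phiBarCoeff_two_mul (n : ℕ) : phiBarCoeff (2 * n) = padicValNat 2 (2 * n) := by
  simp [phiBarCoeff, padicValNat_two_mul_add_one]

theorem phiBarCoeff_two_mul_add_one (n : ℕ) :
    phiBarCoeff (2 * n + 1) = padicValNat 2 (2 * (n + 1)) := by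
  simp [phiBarCoeff, padicValNat_two_mul_add_one, mul_add, add_assoc]

theorem phiBarCoeff_two_mul_add_two (n : ℕ) :
    phiBarCoeff (2 * n + 2) = phiBarCoeff (2 * n + 1) := by
  rw [phiBarCoeff_two_mul_add_one, ← mul_add_one, phiBarCoeff_two_mul]

theorem phiBarCoeff_sq_add_two_mul_add_one_add_two_mul (n : ℕ) :
    phiBarCoeff n ^ 2 + phiBarCoeff (2 * n + 1) + phiBarCoeff (2 * n) +
      (if n = 0 then 1 else 0) = 0 := by
  rw [ZMod.pow_card, phiBarCoeff_two_mul_add_one, phiBarCoeff_two_mul]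
  rcases eq_or_ne n 0 with rfl | hn
  · simp [phiBarCoeff, CharTwo.add_self_eq_zero]
  · rw [padicValNat_prime_mul hn, padicValNat_prime_mul n.add_one_ne_zero, if_neg hn, phiBarCoeff]
    push_cast
    ring_nf
    reduce_mod_char

theorem coeff_natCast_eq_phiBarCoeff (L : LaurentSeries (ZMod 2)) (h0 : L.coeff 0 = 0)
    (hodd : ∀ n : ℕ, 1 ≤ n → L.coeff (2 * (n : ℤ) - 1) = (padicValNat 2 (2 * n) : ZMod 2))
    (heven : ∀ n : ℕ, 1 ≤ n → L.coeff (2 * (n : ℤ)) = (padicValNat 2 (2 * n) : ZMod 2))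
    (n : ℕ) : L.coeff n = phiBarCoeff n := by
  obtain ⟨j, rfl | rfl⟩ := Nat.even_or_odd' n
  · rcases eq_or_ne j 0 with rfl | hj
    · simpa [phiBarCoeff] using h0
    · rw [phiBarCoeff_two_mul, ← heven j (by omega)]
      push_cast; rfl
  · rw [phiBarCoeff_two_mul_add_one, ← hodd (j + 1) (by omega)]
    push_cast; ring_nf

theorem goldenRatio_char_two_Xplus1_series (L : LaurentSeries (ZMod 2))
    (h0 : ∀ m : ℤ, m ≤ 0 → L.coeff m = 0)
    (hodd : ∀ n : ℕ, 1 ≤ n → L.coeff (2 * (n : ℤ) - 1) = (padicValNat 2 (2 * n) : ZMod 2))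
    (heven : ∀ n : ℕ, 1 ≤ n → L.coeff (2 * (n : ℤ)) = (padicValNat 2 (2 * n) : ZMod 2)) :
    L ^ 2 + (HahnSeries.single (-1 : ℤ) (1 : ZMod 2) + 1) * L + 1 = 0 := by
  have hcoeff := coeff_natCast_eq_phiBarCoeff L (h0 0 le_rfl) hodd heven
  have hcoeff_even (n : ℕ) : L.coeff (2 * n) = phiBarCoeff (2 * n) := by
    exact_mod_cast hcoeff (2 * n)
  have hcoeff_odd (n : ℕ) : L.coeff (2 * n + 1) = phiBarCoeff (2 * n + 1) := by
    exact_mod_cast hcoeff (2 * n + 1)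
  refine L.sq_add_mul_add_one_eq_zero_of_coeff h0 (fun n => ?_) (fun n => ?_)
  · rw [hcoeff, hcoeff_odd, hcoeff_even]
    exact phiBarCoeff_sq_add_two_mul_add_one_add_two_mul n
  · have := hcoeff (2 * n + 2)
    push_cast at this
    rw [this, hcoeff_odd, phiBarCoeff_two_mul_add_two]
end

section
/- Let k be a field and φ ∈ k((X^{-1})) with |φ|_∞ < 1 all of whose continued fraction partial quotients have degree 1, with Fibonacci polynomials F_n(X) (denominators of convergents), so deg F_n = n. If n(X) ∈ k[X] is nonzero with Zeckendorf representation n(X) = Σ_{i=0}^r z_i F_i(X) and j is minimal with z_j ≠ 0, then ν_∞({n(X)·φ}) = −j − 1, where {·} denotes the fractional part and ν_∞ the degree valuation. -/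
/-! Each coefficient of `embedPoly P * φ` is `k`-linear in `P`. In `Σ zᵢ Fᵢ φ` the terms with
`i < j` vanish because `zᵢ = 0`, and those with `i > j` have no coefficients at `t¹, …, t^(j+1)`
because `ν_∞({Fᵢ φ}) = -(i+1)`; so up to `t^(j+1)` the series agrees with `z_j F_j φ`. -/

open Polynomial Finset

/-- The element `X` of `k((X⁻¹))`, realized in `LaurentSeries k` (whose variable is `t = X⁻¹`)
as the inverse of `t`, i.e. `single (-1) 1`. -/
noncomputable def bigX (k : Type*) [Field k] : LaurentSeries k :=
  (HahnSeries.single (1 : ℤ) (1 : k))⁻¹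

/-- Embedding of `k[X]` into `k((X⁻¹)) = LaurentSeries k` by evaluating at `X = t⁻¹`. -/
noncomputable def embedPoly {k : Type*} [Field k] (P : Polynomial k) : LaurentSeries k :=
  Polynomial.aeval (bigX k) P

theorem coeff_embedPoly_sum_C_mul_mul {k ι : Type*} [Field k] (φ : LaurentSeries k) (m : ℤ)
    (s : Finset ι) (z : ι → k) (F : ι → k[X]) :
    (embedPoly (∑ i ∈ s, C (z i) * F i) * φ).coeff m =
      ∑ i ∈ s, z i * (embedPoly (F i) * φ).coeff m := by
  simp only [embedPoly, map_sum, map_mul, aeval_C, LaurentSeries.algebraMap_apply, sum_mul,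
    mul_assoc]
  simp only [HahnSeries.C_mul_eq_smul, HahnSeries.coeff_sum, HahnSeries.coeff_smul, smul_eq_mul]

theorem valuation_of_fracPart_via_zeckendorf_general (k : Type*) [Field k]
    (φ : LaurentSeries k)
    (F : ℕ → Polynomial k)
    -- `F n` is the denominator of the `n`-th convergent and all partial quotients have
    -- degree 1: `ν_∞({F_n φ}) = −(n+1)`, i.e. the coefficients of `F_n·φ` at `t^m`
    -- vanish for `1 ≤ m ≤ n` and the coefficient at `t^(n+1)` is nonzero
    (hconv : ∀ n : ℕ,
      (∀ m : ℤ, 1 ≤ m → m ≤ (n : ℤ) → ((embedPoly (F n)) * φ).coeff m = 0) ∧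
      ((embedPoly (F n)) * φ).coeff ((n : ℤ) + 1) ≠ 0)
    (r : ℕ) (z : ℕ → k) (nX : Polynomial k)
    -- Zeckendorf representation `n(X) = Σ_{i=0}^r z_i F_i(X)`
    (hnX : nX = ∑ i ∈ Finset.range (r + 1), C (z i) * F i)
    (j : ℕ) (hjr : j ≤ r) (hj : z j ≠ 0) (hjmin : ∀ i : ℕ, i < j → z i = 0) :
    -- conclusion: `ν_∞({n(X)·φ}) = −j−1`
    (∀ m : ℤ, 1 ≤ m → m ≤ (j : ℤ) → ((embedPoly nX) * φ).coeff m = 0) ∧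
    ((embedPoly nX) * φ).coeff ((j : ℤ) + 1) ≠ 0 := by
  subst hnX
  simp only [coeff_embedPoly_sum_C_mul_mul]
  have term_eq_zero : ∀ i (m : ℤ), 1 ≤ m → m ≤ j + 1 → (m ≤ j ∨ i ≠ j) →
      z i * (embedPoly (F i) * φ).coeff m = 0 := by
    intro i m hm1 hmj hij
    rcases lt_or_ge i j with hi | hi
    · rw [hjmin i hi, zero_mul]
    · rw [(hconv i).1 m hm1 (by omega), mul_zero]
  refine ⟨fun m hm1 hmj ↦ sum_eq_zero fun i _ ↦ term_eq_zero i m hm1 (by omega) (.inl hmj), ?_⟩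
  rw [sum_eq_single_of_mem j (mem_range.2 (by omega))
    fun i _ hij ↦ term_eq_zero i _ (by omega) le_rfl (.inr hij)]
  exact mul_ne_zero hj (hconv j).2

theorem valuation_of_fracPart_via_zeckendorf (k : Type*) [Field k]
    (φ : LaurentSeries k)
    -- `|φ|_∞ < 1`: only negative powers of `X` occur
    (hφ : ∀ m : ℤ, m ≤ 0 → φ.coeff m = 0)
    (F : ℕ → Polynomial k)
    -- `F n` has degree `n`
    (hdeg : ∀ n : ℕ, (F n).natDegree = n)
    -- `F n` is the denominator of the `n`-th convergent and all partial quotients have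
    -- degree 1: `ν_∞({F_n φ}) = −(n+1)`, i.e. the coefficients of `F_n·φ` at `t^m`
    -- vanish for `1 ≤ m ≤ n` and the coefficient at `t^(n+1)` is nonzero
    (hconv : ∀ n : ℕ,
      (∀ m : ℤ, 1 ≤ m → m ≤ (n : ℤ) → ((embedPoly (F n)) * φ).coeff m = 0) ∧
      ((embedPoly (F n)) * φ).coeff ((n : ℤ) + 1) ≠ 0)
    (r : ℕ) (z : ℕ → k) (nX : Polynomial k)
    -- Zeckendorf representation `n(X) = Σ_{i=0}^r z_i F_i(X)`
    (hnX : nX = ∑ i ∈ Finset.range (r + 1), C (z i) * F i)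
    (j : ℕ) (hjr : j ≤ r) (hj : z j ≠ 0) (hjmin : ∀ i : ℕ, i < j → z i = 0) :
    -- conclusion: `ν_∞({n(X)·φ}) = −j−1`
    (∀ m : ℤ, 1 ≤ m → m ≤ (j : ℤ) → ((embedPoly nX) * φ).coeff m = 0) ∧
    ((embedPoly nX) * φ).coeff ((j : ℤ) + 1) ≠ 0 :=
  valuation_of_fracPart_via_zeckendorf_general k φ F hconv r z nX hnX j hjr hj hjmin
end

section
/- Let k be a field and φ = [0; A_1, A_2, …] with deg A_i = 1 for all i, with associated Fibonacci polynomials F_n. Write A_i(X) = u_i X + v_i with u_i ≠ 0. If X^{n-1} = Σ_{i=0}^{n-1} z_i F_i(X), then the coefficients z'_i of X^n = Σ_{i=0}^{n} z'_i F_i(X) satisfy z'_i = u_i^{-1} z_{i-1} − u_{i+1}^{-1} v_{i+1} z_i − u_{i+2}^{-1} z_{i+1} (with z_{-1} := 0 and z_j := 0 for j ≥ n). -/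
open Polynomial Finset

/-! The recurrence `F (i+1) = A_{i+1} F i + F (i-1)`, read backwards, says
`u_{i+1} X F_i = F_{i+1} - v_{i+1} F_i - F_{i-1}`; multiplying `X^{n-1} = ∑ z_i F_i` by `X`
and regrouping gives an expansion of `X^n` in the `F_j`, which is the only one because the
`F_j` have degree `j` and are therefore linearly independent. -/

/-- `f (i - 1)` with `f (-1) = 0`, the paper's conventions `F_{-1} = 0` and `z_{-1} = 0`. -/
def shiftRight {M : Type*} [Zero M] (f : ℕ → M) : ℕ → M
  | 0 => 0
  | i + 1 => f i

section FibonacciPolynomial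

variable {k : Type*} [Field k] {u v : ℕ → k} {F : ℕ → k[X]}

theorem succ_eq_of_recurrence (hF0 : F 0 = 1) (hF1 : F 1 = C (u 1) * X + C (v 1))
    (hFrec : ∀ m, F (m + 2) = (C (u (m + 2)) * X + C (v (m + 2))) * F (m + 1) + F m) :
    ∀ i, F (i + 1) = (C (u (i + 1)) * X + C (v (i + 1))) * F i + shiftRight F i
  | 0 => by simp [hF0, hF1, shiftRight]
  | m + 1 => hFrec m

theorem degree_eq_of_recurrence (hu : ∀ i, 1 ≤ i → u i ≠ 0) (hF0 : F 0 = 1)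
    (hrec : ∀ i, F (i + 1) = (C (u (i + 1)) * X + C (v (i + 1))) * F i + shiftRight F i) :
    ∀ i, (F i).degree = i
  | 0 => by simp [hF0]
  | i + 1 => by
    have hA : (C (u (i + 1)) * X + C (v (i + 1))).degree = 1 := degree_linear (hu _ i.succ_pos)
    have hprev : (shiftRight F i).degree < i + 1 := by
      cases i with
      | zero => simp [shiftRight]
      | succ j =>
        rw [shiftRight, degree_eq_of_recurrence hu hF0 hrec j]
        exact_mod_cast (by omega : j < j + 1 + 1)
    have hAF : ((C (u (i + 1)) * X + C (v (i + 1))) * F i).degree = ↑(i + 1) := by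
      rw [degree_mul, hA, degree_eq_of_recurrence hu hF0 hrec i, add_comm]
      rfl
    rw [hrec, degree_add_eq_left_of_degree_lt (hAF ▸ by exact_mod_cast hprev), hAF]

theorem linearIndependent_of_recurrence (hu : ∀ i, 1 ≤ i → u i ≠ 0) (hF0 : F 0 = 1)
    (hrec : ∀ i, F (i + 1) = (C (u (i + 1)) * X + C (v (i + 1))) * F i + shiftRight F i) :
    LinearIndependent k F :=
  (⟨F, degree_eq_of_recurrence hu hF0 hrec⟩ : Sequence k).linearIndependent

theorem X_mul_sum_of_recurrence
    (hrec : ∀ i, F (i + 1) = (C (u (i + 1)) * X + C (v (i + 1))) * F i + shiftRight F i)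
    {n : ℕ} {c : ℕ → k} (hc : ∀ i, n ≤ i → c i = 0) :
    X * ∑ i ∈ range n, C (u (i + 1) * c i) * F i =
      ∑ j ∈ range (n + 1), C (shiftRight c j - v (j + 1) * c j - c (j + 1)) * F j := by
  have hterm : ∀ i, X * (C (u (i + 1) * c i) * F i) =
      C (c i) * F (i + 1) - C (v (i + 1) * c i) * F i - C (c i) * shiftRight F i := by
    intro i
    rw [hrec i, C_mul, C_mul]
    ring
  have hlow : ∑ j ∈ range (n + 1), C (shiftRight c j) * F j =
      ∑ i ∈ range n, C (c i) * F (i + 1) := by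
    simp [sum_range_succ', shiftRight]
  have hmid : ∑ j ∈ range (n + 1), C (v (j + 1) * c j) * F j =
      ∑ i ∈ range n, C (v (i + 1) * c i) * F i := by
    simp [sum_range_succ, hc n le_rfl]
  have hhigh : ∑ j ∈ range (n + 1), C (c (j + 1)) * F j =
      ∑ i ∈ range n, C (c i) * shiftRight F i := by
    calc ∑ j ∈ range (n + 1), C (c (j + 1)) * F j
        = ∑ i ∈ range (n + 2), C (c i) * shiftRight F i := by
          simp [sum_range_succ' _ (n + 1), shiftRight]
      _ = ∑ i ∈ range n, C (c i) * shiftRight F i := by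
          simp [sum_range_succ, hc n le_rfl, hc (n + 1) n.le_succ]
  simp only [mul_sum, hterm, sum_sub_distrib, C_sub, sub_mul, hlow, hmid, hhigh]

end FibonacciPolynomial

theorem eq_of_sum_C_mul_eq {R : Type*} [Semiring R] {p : ℕ → R[X]} (hp : LinearIndependent R p)
    {s : Finset ℕ} {a b : ℕ → R}
    (h : ∑ i ∈ s, C (a i) * p i = ∑ i ∈ s, C (b i) * p i) : ∀ i ∈ s, a i = b i :=
  linearIndependent_iff'ₛ.mp hp s a b (by simpa only [C_mul'] using h)

theorem zeckendorf_recursion (k : Type*) [Field k]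
    (u v : ℕ → k) (hu : ∀ i : ℕ, 1 ≤ i → u i ≠ 0)
    (F : ℕ → Polynomial k)
    (hF0 : F 0 = 1)
    (hF1 : F 1 = C (u 1) * X + C (v 1))
    (hFrec : ∀ m : ℕ, F (m + 2) = (C (u (m + 2)) * X + C (v (m + 2))) * F (m + 1) + F m)
    (n : ℕ) (hn : 1 ≤ n)
    (z : ℕ → k)
    (hz : (X : Polynomial k) ^ (n - 1) = ∑ i ∈ Finset.range n, C (z i) * F i)
    (hztail : ∀ i : ℕ, n ≤ i → z i = 0)
    (z' : ℕ → k)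
    (hz' : (X : Polynomial k) ^ n = ∑ i ∈ Finset.range (n + 1), C (z' i) * F i) :
    ∀ i : ℕ, i ≤ n →
      z' i = (if i = 0 then 0 else (u i)⁻¹ * z (i - 1))
        - (u (i + 1))⁻¹ * v (i + 1) * z i - (u (i + 2))⁻¹ * z (i + 1) := by
  obtain ⟨m, rfl⟩ : ∃ m, n = m + 1 := ⟨n - 1, by omega⟩
  rw [Nat.add_sub_cancel] at hz
  have hrec := succ_eq_of_recurrence hF0 hF1 hFrec
  set c : ℕ → k := fun i => (u (i + 1))⁻¹ * z i
  have hc : ∀ i, m + 1 ≤ i → c i = 0 := fun i hi => by simp [c, hztail i hi]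
  have hzc : ∀ i, u (i + 1) * c i = z i := fun i => mul_inv_cancel_left₀ (hu _ i.succ_pos) _
  have hXn : X ^ (m + 1) =
      ∑ j ∈ range (m + 2), C (shiftRight c j - v (j + 1) * c j - c (j + 1)) * F j := by
    rw [← X_mul_sum_of_recurrence hrec hc, pow_succ', hz]
    simp only [hzc]
  intro i hi
  rw [eq_of_sum_C_mul_eq (linearIndependent_of_recurrence hu hF0 hrec) (hz'.symm.trans hXn) i
    (mem_range.mpr (by omega))]
  cases i <;> simp [c, shiftRight] <;> ring
end

section
/- Over F_3, the Laurent series φ = Σ_{i=0}^∞ a_i X^{-2i-1} with coefficients defined recursively by a_0 = 1, a_1 = 2, and for each k ≥ 1: a_{3^k − 1} = 2, followed by a repetition of the first 3^k − 1 coefficients (a_{3^k + j} = a_j for 0 ≤ j ≤ 3^k − 2), followed by 3^k zeros (a_{2·3^k − 1 + j} = 0 for 0 ≤ j ≤ 3^k − 1), satisfies φ² + X·φ − 1 = 0. -/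
open Polynomial Finset

lemma h3poly : (3 : (ZMod 3)[X]) = 0 := by
  rw [← map_ofNat (C : ZMod 3 →+* (ZMod 3)[X]) 3, show ((3:ZMod 3)) = 0 from rfl, map_zero]

lemma step_alg {R : Type*} [CommRing R] (h3 : (3:R) = 0) (q x v : R)
    (h : q^2 + q - x = v*q + x*v + 2*v^2) :
    (q*(1+v) + v^2 + 2*v^3)^2 + (q*(1+v) + v^2 + 2*v^3) - x
      = v^3*(q*(1+v) + v^2 + 2*v^3) + x*v^3 + 2*v^6 := by
  linear_combination (1+2*v+v^2) * h +
    (v^2+2*v^3+v^4+v^5+x*v+x*v^2+q*v^2+2*q*v^3+q*v^4) * h3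

noncomputable def truncP (a : ℕ → ZMod 3) (M : ℕ) : (ZMod 3)[X] :=
  ∑ n ∈ Finset.range M, C (a n) * X^n

lemma truncP_coeff (a : ℕ → ZMod 3) (M i : ℕ) :
    (truncP a M).coeff i = if i < M then a i else 0 := by
  simp only [truncP, finset_sum_coeff, coeff_C_mul, coeff_X_pow, mul_ite, mul_one, mul_zero]
  rw [Finset.sum_ite_eq (Finset.range M) i a]
  simp [Finset.mem_range]

lemma sum_range_add' {M : Type*} [AddCommMonoid M] (f : ℕ → M) (m n : ℕ) :
    ∑ i ∈ Finset.range (m+n), f i = ∑ i ∈ Finset.range m, f i + ∑ j ∈ Finset.range n, f (m+j) := by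
  induction n with
  | zero => simp
  | succ n ih => rw [← Nat.add_assoc, Finset.sum_range_succ, ih, Finset.sum_range_succ, add_assoc]

lemma truncP_add (a : ℕ → ZMod 3) (m n : ℕ) :
    truncP a (m+n) = truncP a m + ∑ j ∈ Finset.range n, C (a (m+j)) * X^(m+j) :=
  sum_range_add' _ m n


lemma aux_pow (n : ℕ) : n + 3 ≤ 3^(n+1) := by
  induction n with
  | zero => norm_num
  | succ n ih =>
    calc n + 1 + 3 ≤ (n+3)*3 := by omega
    _ ≤ 3^(n+1)*3 := Nat.mul_le_mul_right 3 ih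
    _ = 3^(n+2) := by rw [← pow_succ]


section main
variable (a : ℕ → ZMod 3)
    (h0 : a 0 = 1) (h1 : a 1 = 2)
    (hstep2 : ∀ k : ℕ, 1 ≤ k → a (3 ^ k - 1) = 2)
    (hrepeat : ∀ k : ℕ, 1 ≤ k → ∀ j : ℕ, j ≤ 3 ^ k - 2 → a (3 ^ k + j) = a j)
    (hzeros : ∀ k : ℕ, 1 ≤ k → ∀ j : ℕ, j ≤ 3 ^ k - 1 → a (2 * 3 ^ k - 1 + j) = 0)

include hstep2 hrepeat hzeros in
lemma trunc_structure (k : ℕ) (hk : 1 ≤ k) :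
    X * truncP a (3^(k+1))
      = (X * truncP a (3^k)) * (1 + X^(3^k)) + (X^(3^k))^2 + 2*(X^(3^k))^3 := by
  have hN3 : 3 ≤ 3^k := by
    calc 3 = 3^1 := by norm_num
    _ ≤ 3^k := Nat.pow_le_pow_right (by norm_num) hk
  obtain ⟨e, hNe⟩ : ∃ e, 3^k = e + 3 := ⟨3^k - 3, by omega⟩
  -- split the big truncation
  have hsplit : 3^(k+1) = (e+3) + ((e+2) + (e+4)) := by rw [pow_succ, hNe]; ring
  have hA : truncP a (3^(k+1))
      = truncP a (e+3) + ∑ j ∈ Finset.range (e+2), C (a ((e+3)+j)) * X^((e+3)+j)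
        + ∑ j ∈ Finset.range (e+4), C (a ((e+3)+((e+2)+j))) * X^((e+3)+((e+2)+j)) := by
    rw [hsplit, truncP_add, sum_range_add']
    ring
  -- first sum: repetition
  have hB : ∑ j ∈ Finset.range (e+2), C (a ((e+3)+j)) * X^((e+3)+j)
      = X^(e+3) * truncP a (e+2) := by
    rw [truncP, Finset.mul_sum]
    refine Finset.sum_congr rfl fun j hj => ?_
    have hj' : j < e + 2 := Finset.mem_range.mp hj
    have : a ((e+3)+j) = a j := by
      have := hrepeat k hk j (by omega)
      rwa [hNe] at this
    rw [this, pow_add]; ring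
  -- second sum: zeros then the single 2
  have hC : ∑ j ∈ Finset.range (e+4), C (a ((e+3)+((e+2)+j))) * X^((e+3)+((e+2)+j))
      = C 2 * X^(3*e+8) := by
    rw [Finset.sum_range_succ]
    have hz : ∀ j ∈ Finset.range (e+3), C (a ((e+3)+((e+2)+j))) * X^((e+3)+((e+2)+j)) = 0 := by
      intro j hj
      have hj' : j < e + 3 := Finset.mem_range.mp hj
      have hz0 := hzeros k hk j (by rw [hNe]; omega)
      rw [hNe] at hz0
      have hidx : (e+3)+((e+2)+j) = 2*(e+3) - 1 + j := by omega
      rw [hidx, hz0, map_zero, zero_mul]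
    rw [Finset.sum_eq_zero hz, zero_add]
    have hpow : 3^(k+1) = 3*(e+3) := by rw [pow_succ, hNe]; ring
    have h2 := hstep2 (k+1) (by omega)
    rw [hpow] at h2
    have hidx : (e+3)+((e+2)+(e+3)) = 3*(e+3) - 1 := by omega
    rw [hidx, h2, show 3*(e+3)-1 = 3*e+8 by omega]
  -- last coefficient of truncP a (e+3)
  have hD : truncP a (e+3) = truncP a (e+2) + C 2 * X^(e+2) := by
    rw [show e+3 = (e+2)+1 by omega, truncP_add, Finset.sum_range_one]
    have h2 := hstep2 k hk
    rw [hNe] at h2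
    have : (e+2)+0 = e+3-1 := by omega
    rw [this, h2]
  rw [hNe]
  rw [show 3^(k+1) = (e+3)+((e+2)+(e+4)) from hsplit] at hA ⊢
  rw [hA, hB, hC, hD]
  have hC2 : (C 2 : (ZMod 3)[X]) = 2 := by
    rw [← map_ofNat (C : ZMod 3 →+* (ZMod 3)[X]) 2]
  rw [hC2]
  linear_combination (-(X:(ZMod 3)[X])^(2*e+6)) * h3poly

include h0 h1 hstep2 hrepeat hzeros in
lemma key_rel : ∀ k : ℕ, 1 ≤ k →
    (X * truncP a (3^k))^2 + X * truncP a (3^k) - X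
      = X^(3^k) * (X * truncP a (3^k)) + X^(3^k+1) + 2*X^(2*3^k) := by
  intro k hk
  induction k, hk using Nat.le_induction with
  | base =>
    have ha2 : a 2 = 2 := by simpa using hstep2 1 le_rfl
    have hT : truncP a 3 = 1 + 2*X + 2*X^2 := by
      have hC2 : (C 2 : (ZMod 3)[X]) = 2 := by
        rw [← map_ofNat (C : ZMod 3 →+* (ZMod 3)[X]) 2]
      simp [truncP, Finset.sum_range_succ, h0, h1, ha2, hC2]
    rw [show (3:ℕ)^1 = 3 by norm_num, hT]
    rw [show 2*3 = 6 by norm_num, show (3:ℕ)+1 = 4 by norm_num]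
    linear_combination (X^2+2*X^3+2*X^4+2*X^5) * h3poly
  | succ k hk ih =>
    have hS := trunc_structure a hstep2 hrepeat hzeros k hk
    have e1 : (X:(ZMod 3)[X])^(3^(k+1)) = (X^(3^k))^3 := by
      rw [← pow_mul, pow_succ]
    have e2 : (X:(ZMod 3)[X])^(3^(k+1)+1) = (X^(3^k))^3 * X := by
      rw [pow_succ _ (3^(k+1)), e1]
    have e3 : (X:(ZMod 3)[X])^(2*3^(k+1)) = ((X^(3^k))^3)^2 := by
      rw [← pow_mul, ← pow_mul]; congr 1; ring
    rw [e1, e2, e3]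
    have ih' : (X * truncP a (3^k))^2 + X * truncP a (3^k) - X
        = X^(3^k) * (X * truncP a (3^k)) + X * X^(3^k) + 2*(X^(3^k))^2 := by
      rw [ih]; congr 1; · congr 1; rw [pow_succ]; ring
      rw [← pow_mul]; congr 1; ring
    have hstep := step_alg h3poly (X * truncP a (3^k)) X (X^(3^k)) ih'
    linear_combination hstep + (X * truncP a (3^(k+1))
      + (X * truncP a (3^k)) * (1 + X^(3^k)) + (X^(3^k))^2 + 2*(X^(3^k))^3
      + 1 - (X^(3^k))^3) * hS

include h0 h1 hstep2 hrepeat hzeros in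
lemma convA : ∀ n : ℕ, 1 ≤ n →
    (∑ p ∈ Finset.HasAntidiagonal.antidiagonal (n-1), a p.1 * a p.2) + a n = 0 := by
  intro n hn
  obtain ⟨m, rfl⟩ : ∃ m, n = m+1 := ⟨n-1, by omega⟩
  have hrel := key_rel a h0 h1 hstep2 hrepeat hzeros (m+1) (by omega)
  obtain ⟨N, hNdef⟩ : ∃ N, 3^(m+1) = N := ⟨_, rfl⟩
  have hN : m + 3 ≤ N := hNdef ▸ aux_pow m
  rw [hNdef] at hrel
  set T := truncP a N with hT
  have hTc : ∀ i, i < N → T.coeff i = a i := by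
    intro i hi; rw [hT, truncP_coeff, if_pos hi]
  have hcoeff := congrArg (fun p => Polynomial.coeff p (m+2)) hrel
  simp only [Polynomial.coeff_add, Polynomial.coeff_sub] at hcoeff
  have hL1 : ((X*T)^2).coeff (m+2) = ∑ p ∈ Finset.HasAntidiagonal.antidiagonal m, a p.1 * a p.2 := by
    rw [show (X*T)^2 = X^2 * (T*T) by ring, Polynomial.coeff_X_pow_mul (T*T) 2 m,
      Polynomial.coeff_mul]
    refine Finset.sum_congr rfl fun p hp => ?_
    have hp' := Finset.HasAntidiagonal.mem_antidiagonal.mp hp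
    rw [hTc p.1 (by omega), hTc p.2 (by omega)]
  have hL2 : (X*T).coeff (m+2) = a (m+1) := by
    rw [show m+2 = (m+1)+1 by omega, Polynomial.coeff_X_mul, hTc (m+1) (by omega)]
  have hL3 : (X:(ZMod 3)[X]).coeff (m+2) = 0 := by
    rw [Polynomial.coeff_X, if_neg (by omega)]
  have hR1 : (X^N * (X*T)).coeff (m+2) = 0 := by
    rw [Polynomial.coeff_X_pow_mul', if_neg (by omega)]
  have hR2 : ((X:(ZMod 3)[X])^(N+1)).coeff (m+2) = 0 := by
    rw [Polynomial.coeff_X_pow, if_neg (by omega)]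
  have hR3 : ((2:(ZMod 3)[X]) * X^(2*N)).coeff (m+2) = 0 := by
    rw [← map_ofNat (C : ZMod 3 →+* (ZMod 3)[X]) 2, coeff_C_mul,
      Polynomial.coeff_X_pow, if_neg (by omega), mul_zero]
  rw [hL1, hL2, hL3, hR1, hR2, hR3] at hcoeff
  simpa using hcoeff

noncomputable def Fps (a : ℕ → ZMod 3) : PowerSeries (ZMod 3) :=
  PowerSeries.mk fun n => if n % 2 = 1 then a (n/2) else 0

include h0 h1 hstep2 hrepeat hzeros in
lemma ps_rel : PowerSeries.X^2 * (Fps a)^2 + PowerSeries.X * Fps a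
    - PowerSeries.X^2 = 0 := by
  have hconv := convA a h0 h1 hstep2 hrepeat hzeros
  have hf : ∀ n, PowerSeries.coeff (R := ZMod 3) n (Fps a)
      = if n % 2 = 1 then a (n/2) else 0 := fun n => PowerSeries.coeff_mk n _
  -- coefficient of F^2
  have hF2 : ∀ m : ℕ, PowerSeries.coeff (R := ZMod 3) m ((Fps a)^2)
      = if m % 2 = 1 then 0 else if m = 0 then 0 else -(a (m/2)) := by
    intro m
    rw [pow_two, PowerSeries.coeff_mul]
    by_cases hodd : m % 2 = 1
    · rw [if_pos hodd]
      refine Finset.sum_eq_zero fun p hp => ?_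
      have hp' := Finset.HasAntidiagonal.mem_antidiagonal.mp hp
      rcases Nat.mod_two_eq_zero_or_one p.1 with he | ho
      · rw [hf, if_neg (by omega), zero_mul]
      · rw [hf p.2, if_neg (by omega), mul_zero]
    · rw [if_neg hodd]
      by_cases hm0 : m = 0
      · subst hm0
        simp [hf]
      · rw [if_neg hm0]
        obtain ⟨r, rfl⟩ : ∃ r, m = 2*r := ⟨m/2, by omega⟩
        have hr : 1 ≤ r := by omega
        have hsum : (∑ p ∈ Finset.HasAntidiagonal.antidiagonal (2*r),
            (PowerSeries.coeff (R := ZMod 3) p.1 (Fps a)) * (PowerSeries.coeff (R := ZMod 3) p.2 (Fps a)))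
            = ∑ q ∈ Finset.HasAntidiagonal.antidiagonal (r-1), a q.1 * a q.2 := by
          refine Finset.sum_bij_ne_zero (fun p _ _ => ((p.1-1)/2, (p.2-1)/2)) ?_ ?_ ?_ ?_
          · rintro ⟨x, y⟩ h1 h2
            have hmem := Finset.HasAntidiagonal.mem_antidiagonal.mp h1
            have hx : x % 2 = 1 := by
              by_contra hx
              exact h2 (by rw [hf, if_neg hx, zero_mul])
            have hy : y % 2 = 1 := by
              by_contra hy
              exact h2 (by rw [hf y, if_neg hy, mul_zero])
            exact Finset.HasAntidiagonal.mem_antidiagonal.mpr (by simp only; omega)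
          · rintro ⟨x, y⟩ h11 h12 ⟨x', y'⟩ h21 h22 heq
            have hx : x % 2 = 1 := by
              by_contra hx; exact h12 (by rw [hf, if_neg hx, zero_mul])
            have hy : y % 2 = 1 := by
              by_contra hy; exact h12 (by rw [hf y, if_neg hy, mul_zero])
            have hx' : x' % 2 = 1 := by
              by_contra hx; exact h22 (by rw [hf, if_neg hx, zero_mul])
            have hy' : y' % 2 = 1 := by
              by_contra hy; exact h22 (by rw [hf y', if_neg hy, mul_zero])
            have h1 : (x-1)/2 = (x'-1)/2 := congrArg Prod.fst heq
            have h2 : (y-1)/2 = (y'-1)/2 := congrArg Prod.snd heq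
            have : x = x' := by omega
            have : y = y' := by omega
            simp_all
          · rintro ⟨u, v⟩ hb hgb
            refine ⟨(2*u+1, 2*v+1), ?_, ?_, ?_⟩
            · have := Finset.HasAntidiagonal.mem_antidiagonal.mp hb
              exact Finset.HasAntidiagonal.mem_antidiagonal.mpr (by simp only at this ⊢; omega)
            · rw [hf, hf, if_pos (by omega), if_pos (by omega),
                show (2*u+1)/2 = u by omega, show (2*v+1)/2 = v by omega]
              exact hgb
            · simp only [Prod.mk.injEq]
              constructor <;> omega
          · rintro ⟨x, y⟩ h1 h2
            have hx : x % 2 = 1 := by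
              by_contra hx; exact h2 (by rw [hf, if_neg hx, zero_mul])
            have hy : y % 2 = 1 := by
              by_contra hy; exact h2 (by rw [hf y, if_neg hy, mul_zero])
            rw [hf, hf, if_pos hx, if_pos hy,
              show x/2 = (x-1)/2 by omega, show y/2 = (y-1)/2 by omega]
        rw [hsum]
        have := hconv r hr
        have hdiv : 2*r/2 = r := by omega
        rw [hdiv]
        linear_combination this
  ext n
  simp only [map_add, map_sub, map_zero, LinearMap.map_zero]
  rw [PowerSeries.coeff_X_pow_mul', PowerSeries.coeff_X_pow,
    show (PowerSeries.X : PowerSeries (ZMod 3)) * Fps a = PowerSeries.X^1 * Fps a by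
      rw [pow_one],
    PowerSeries.coeff_X_pow_mul']
  rcases n with _ | _ | m
  · norm_num
  · norm_num [hf]
  · rw [if_pos (by omega), if_pos (by omega),
      show m + 2 - 2 = m by omega, show m + 2 - 1 = m + 1 by omega, hF2, hf]
    by_cases hodd : m % 2 = 1
    · rw [if_pos hodd, if_neg (by omega), if_neg (by omega)]
      ring
    · by_cases hm0 : m = 0
      · subst hm0
        norm_num [h0]
      · rw [if_neg hodd, if_neg hm0, if_pos (by omega), if_neg (by omega),
          show (m+1)/2 = m/2 by omega]
        ring
end main

theorem goldenRatio_series_mod_three (a : ℕ → ZMod 3)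
    (h0 : a 0 = 1) (h1 : a 1 = 2)
    (hstep2 : ∀ k : ℕ, 1 ≤ k → a (3 ^ k - 1) = 2)
    (hrepeat : ∀ k : ℕ, 1 ≤ k → ∀ j : ℕ, j ≤ 3 ^ k - 2 → a (3 ^ k + j) = a j)
    (hzeros : ∀ k : ℕ, 1 ≤ k → ∀ j : ℕ, j ≤ 3 ^ k - 1 → a (2 * 3 ^ k - 1 + j) = 0)
    (φ : LaurentSeries (ZMod 3))
    (hφodd : ∀ i : ℕ, φ.coeff (2 * (i : ℤ) + 1) = a i)
    (hφ : ∀ m : ℤ, (¬ ∃ i : ℕ, m = 2 * (i : ℤ) + 1) → φ.coeff m = 0) :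
    φ ^ 2 + (HahnSeries.single (-1 : ℤ) (1 : ZMod 3)) * φ - 1 = 0 := by
  have hrel := ps_rel a h0 h1 hstep2 hrepeat hzeros
  set Φ := HahnSeries.ofPowerSeries ℤ (ZMod 3) (Fps a) with hΦdef
  have hφF : φ = Φ := by
    ext m
    by_cases hm : 0 ≤ m
    · lift m to ℕ using hm
      rw [hΦdef, HahnSeries.ofPowerSeries_apply_coeff]
      simp only [Fps, PowerSeries.coeff_mk]
      by_cases ho : m % 2 = 1
      · obtain ⟨i, rfl⟩ : ∃ i, m = 2*i+1 := ⟨m/2, by omega⟩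
        rw [if_pos ho, show (2*i+1)/2 = i by omega,
          show ((2*i+1 : ℕ) : ℤ) = 2*(i:ℤ)+1 by push_cast; ring]
        exact hφodd i
      · rw [if_neg ho]
        apply hφ
        rintro ⟨i, hi⟩
        omega
    · push_neg at hm
      rw [hφ m (by rintro ⟨i, hi⟩; omega), hΦdef, HahnSeries.ofPowerSeries_apply,
        HahnSeries.embDomain_notin_range]
      rintro ⟨n, hn⟩
      have hn' : ((n:ℕ):ℤ) = m := hn
      omega
  have hmap := congrArg (HahnSeries.ofPowerSeries ℤ (ZMod 3)) hrel
  rw [map_sub, map_add, map_mul, map_mul, map_pow, map_pow, map_zero,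
    HahnSeries.ofPowerSeries_X, ← hΦdef] at hmap
  have s2 : (HahnSeries.single (1:ℤ) (1:ZMod 3))^2 = HahnSeries.single (2:ℤ) (1:ZMod 3) := by
    rw [pow_two, HahnSeries.single_mul_single, show (1:ℤ)+1 = 2 by norm_num, one_mul]
  have t1 : HahnSeries.single (-2:ℤ) (1:ZMod 3) * HahnSeries.single (2:ℤ) (1:ZMod 3) = 1 := by
    rw [HahnSeries.single_mul_single, show (-2:ℤ)+2 = 0 by norm_num, one_mul,
      HahnSeries.single_zero_one]
  have t2 : HahnSeries.single (-2:ℤ) (1:ZMod 3) * HahnSeries.single (1:ℤ) (1:ZMod 3)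
      = HahnSeries.single (-1:ℤ) (1:ZMod 3) := by
    rw [HahnSeries.single_mul_single, show (-2:ℤ)+1 = -1 by norm_num, one_mul]
  rw [hφF]
  have hfin : Φ^2 + HahnSeries.single (-1:ℤ) (1:ZMod 3) * Φ - 1
      = HahnSeries.single (-2:ℤ) (1:ZMod 3) *
        ((HahnSeries.single (1:ℤ) (1:ZMod 3))^2 * Φ^2
          + HahnSeries.single (1:ℤ) (1:ZMod 3) * Φ
          - (HahnSeries.single (1:ℤ) (1:ZMod 3))^2) := by
    rw [s2]
    linear_combination (1 - Φ^2) * t1 - Φ * t2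
  rw [hfin, hmap, mul_zero]
end

section
/- Let φ ∈ k((X^{-1})) be the root of Y² + XY − 1 = 0 with |φ|_∞ < 1, over a field k of characteristic p > 0. Writing φ = Σ_{i=1}^∞ c_i X^{-i}, one has c_{2r} = 0 for all r ≥ 1 and c_{2r+1} = ((−1)^r · C_r mod p)·1, where C_r is the r-th Catalan number. -/
/-!
With `t = X⁻¹` the equation reads `t φ² + φ = t`. Substituting `-t²` into the Catalan relation
`C = 1 + x C²` shows that `ψ = t C(-t²) = ∑ (-1)ʳ Cᵣ t²ʳ⁺¹` is a solution over any commutative ring.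
It is the only solution without a `t⁻¹` term: the difference of two solutions is annihilated by
`t (φ + ψ) + 1`, whose constant coefficient is `1`.
-/

open PowerSeries

noncomputable def catalanOddSeries (R : Type*) [CommRing R] : R⟦X⟧ :=
  X * expand 2 two_ne_zero (rescale (-1) (map (Nat.castRingHom R) catalanSeries))

section catalanOddSeries

variable (R : Type*) [CommRing R]

theorem X_mul_catalanOddSeries_sq_add_self :
    X * catalanOddSeries R ^ 2 + catalanOddSeries R = X := by
  rw [catalanOddSeries]
  set s := expand 2 two_ne_zero (rescale (-1) (map (Nat.castRingHom R) catalanSeries))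
  have hs : s ^ 2 * -X ^ 2 + 1 = s := by
    have := congrArg (fun f => expand 2 two_ne_zero (rescale (-1) (map (Nat.castRingHom R) f)))
      catalanSeries_sq_mul_X_add_one
    simpa [rescale_neg_one_X] using this
  linear_combination -X * hs

theorem coeff_catalanOddSeries_two_mul (r : ℕ) : coeff (2 * r) (catalanOddSeries R) = 0 := by
  rcases r with _ | r
  · simp [catalanOddSeries]
  · rw [show 2 * (r + 1) = (2 * r + 1) + 1 by ring, catalanOddSeries, coeff_succ_X_mul,
      coeff_expand_of_not_dvd _ _ _ (by omega)]

theorem coeff_catalanOddSeries_two_mul_add_one (r : ℕ) :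
    coeff (2 * r + 1) (catalanOddSeries R) = (-1) ^ r * catalan r := by
  simp [catalanOddSeries, coeff_succ_X_mul, coeff_rescale]

end catalanOddSeries

theorem LaurentSeries.eq_of_single_mul_sq_add_self_eq {R : Type*} [CommRing R] [IsDomain R]
    {φ ψ : LaurentSeries R} (hφ : φ.coeff (-1) = 0) (hψ : ψ.coeff (-1) = 0)
    (h : HahnSeries.single 1 1 * φ ^ 2 + φ = HahnSeries.single 1 1 * ψ ^ 2 + ψ) : φ = ψ := by
  have hunit : (HahnSeries.single (1 : ℤ) (1 : R) * (φ + ψ) + 1).coeff 0 = 1 := by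
    rw [HahnSeries.coeff_add, HahnSeries.coeff_one, show (0 : ℤ) = -1 + 1 by norm_num,
      HahnSeries.coeff_single_mul_add]
    simp [hφ, hψ]
  have hne : HahnSeries.single (1 : ℤ) (1 : R) * (φ + ψ) + 1 ≠ 0 := fun h0 => by
    simp [h0] at hunit
  have hfactor : (φ - ψ) * (HahnSeries.single 1 1 * (φ + ψ) + 1) = 0 := by
    linear_combination h
  exact sub_eq_zero.mp ((mul_eq_zero.mp hfactor).resolve_right hne)

theorem goldenRatio_series_catalan_general (k : Type*) [Field k]
    (φ : LaurentSeries k)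
    (hsmall : ∀ m : ℤ, m ≤ 0 → φ.coeff m = 0)
    (hroot : φ ^ 2 + (HahnSeries.single (-1 : ℤ) (1 : k)) * φ - 1 = 0) :
    (∀ r : ℕ, 1 ≤ r → φ.coeff (2 * (r : ℤ)) = 0) ∧
    (∀ r : ℕ, φ.coeff (2 * (r : ℤ) + 1) = (((-1 : ℤ) ^ r * (catalan r : ℤ) : ℤ) : k)) := by
  have hX : HahnSeries.single (1 : ℤ) (1 : k) * HahnSeries.single (-1) 1 = 1 := by
    simp [HahnSeries.single_mul_single]
  have hψ := congrArg (HahnSeries.ofPowerSeries ℤ k) (X_mul_catalanOddSeries_sq_add_self k)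
  simp only [map_add, map_mul, map_pow, HahnSeries.ofPowerSeries_X] at hψ
  have hφψ : φ = HahnSeries.ofPowerSeries ℤ k (catalanOddSeries k) := by
    refine LaurentSeries.eq_of_single_mul_sq_add_self_eq (hsmall _ (by norm_num))
      (by simp [PowerSeries.coeff_coe]) ?_
    linear_combination HahnSeries.single 1 1 * hroot - φ * hX - hψ
  subst hφψ
  refine ⟨fun r _ => ?_, fun r => ?_⟩
  · exact_mod_cast (LaurentSeries.coeff_coe_powerSeries _ (2 * r)).trans
      (coeff_catalanOddSeries_two_mul k r)
  · exact_mod_cast (LaurentSeries.coeff_coe_powerSeries _ (2 * r + 1)).trans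
      (coeff_catalanOddSeries_two_mul_add_one k r)

theorem goldenRatio_series_catalan (k : Type*) [Field k] (p : ℕ) (hp : p.Prime) [CharP k p]
    (φ : LaurentSeries k)
    (hsmall : ∀ m : ℤ, m ≤ 0 → φ.coeff m = 0)
    (hroot : φ ^ 2 + (HahnSeries.single (-1 : ℤ) (1 : k)) * φ - 1 = 0) :
    (∀ r : ℕ, 1 ≤ r → φ.coeff (2 * (r : ℤ)) = 0) ∧
    (∀ r : ℕ, φ.coeff (2 * (r : ℤ) + 1) = (((-1 : ℤ) ^ r * (catalan r : ℤ) : ℤ) : k)) :=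
  goldenRatio_series_catalan_general k φ hsmall hroot
end
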